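/- (Standard deviation of the Doppler cut) For every real f, the standard deviation of the normalized zero-delay cut satisfies std[|Λ_yy(0, f)| / |Λ_yy(0, 0)|] ≤ √( (1 − sinc²(π f ρ))/M ) · |sinc(π f T_p)|, where |Λ_yy(0,0)| = M T_p, std denotes the square root of the variance, and sinc(x) = sin(x)/x with sinc(0) = 1. -/

import Mathlib

open MeasureTheory ProbabilityTheory Real Finset

/-- Rectangular pulse of width `Tp`: equals `1` on `(0, Tp]` and `0` elsewhere. -/
noncomputable def pulse (Tp t : ℝ) : ℂ :=
  if 0 < t ∧ t ≤ Tp then 1 else 0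

/-- Pulse train of `M` pulses with nominal PRI `Tr`, pulse width `Tp`, and jitters `ε`. -/
noncomputable def train (M : ℕ) (Tr Tp : ℝ) (ε : ℕ → ℝ) (t : ℝ) : ℂ :=
  ∑ m ∈ Finset.range M, pulse Tp (t - m * Tr - ε m)

/-- Ambiguity function `Λ_uu(τ, f) = ∫ u(t) u*(t-τ) e^{-j2πft} dt`. -/
noncomputable def AF (u : ℝ → ℂ) (τ f : ℝ) : ℂ :=
  ∫ t : ℝ, u t * (starRingEnd ℂ) (u (t - τ)) * Complex.exp (-(2 * Real.pi * f * t) * Complex.I)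

/-- `sinc x = sin x / x`, with `sinc 0 = 1`. -/
noncomputable def sinc (x : ℝ) : ℝ := if x = 0 then 1 else Real.sin x / x

/-!
When every jitter lies in `(-ρ/2, ρ/2)` the pulses have disjoint supports, so `|y|²` is the
indicator of `M` disjoint intervals and `Λ_yy(0, f)` factors as the pulse spectrum, of modulus
`T_p |sinc(π f T_p)|`, times the phase sum `S = ∑ₘ e^{-j2πf(m T_r + ε_m)}`. Since `E|S| ≥ |E S|`,
the variance of `|S|` is at most `E|S|² - |E S|² = Var(Re S) + Var(Im S)`, which for independent
unimodular summands splits as `∑ₘ (1 - |E e^{-j2πf ε_m}|²)`; the mean is the characteristic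
function of the uniform law, `sinc(π f ρ)`, so each summand is at most `1 - sinc²(π f ρ)`.
-/

open Complex (I)

theorem integral_exp_const_mul_I_eq_sinc (c r : ℝ) :
    ∫ t in -r..r, Complex.exp ((c * t : ℝ) * I) = 2 * r * Real.sinc (c * r) := by
  rcases eq_or_ne c 0 with rfl | hc
  · simp [two_mul]
  have hscale := intervalIntegral.smul_integral_comp_mul_left
    (fun u : ℝ => Complex.exp (u * I)) c (a := -r) (b := r)
  rw [mul_neg, integral_exp_mul_I_eq_sinc] at hscale
  have hc' : (c : ℂ) ≠ 0 := by exact_mod_cast hc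
  simp only [Complex.real_smul] at hscale
  push_cast at hscale ⊢
  rw [← mul_right_inj' hc', hscale]
  ring

theorem norm_integral_exp_const_mul_I (c T : ℝ) :
    ‖∫ t in (0)..T, Complex.exp ((c * t : ℝ) * I)‖ = |T| * |Real.sinc (c * T / 2)| := by
  have hshift := intervalIntegral.integral_comp_add_right
    (fun t : ℝ => Complex.exp ((c * t : ℝ) * I)) (a := -(T / 2)) (b := T / 2) (T / 2)
  have hsplit : ∀ u : ℝ, Complex.exp ((c * (u + T / 2) : ℝ) * I)
      = Complex.exp ((c * T / 2 : ℝ) * I) * Complex.exp ((c * u : ℝ) * I) := by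
    intro u; rw [← Complex.exp_add]; push_cast; ring_nf
  simp only [hsplit, intervalIntegral.integral_const_mul, integral_exp_const_mul_I_eq_sinc,
    neg_add_cancel, add_halves] at hshift
  rw [← hshift, norm_mul, Complex.norm_exp_ofReal_mul_I, one_mul, norm_mul, norm_mul,
    Complex.norm_real, Complex.norm_real, Complex.norm_ofNat]
  simp only [Real.norm_eq_abs, abs_div]
  ring_nf

theorem charFun_cond_Ioo {r : ℝ} (hr : 0 < r) (t : ℝ) :
    charFun (volume[|Set.Ioo (-r) r]) t = Real.sinc (t * r) := by
  have hvol : volume (Set.Ioo (-r) r) = ENNReal.ofReal (2 * r) := by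
    rw [Real.volume_Ioo]; ring_nf
  rw [charFun_apply_real, ProbabilityTheory.cond, integral_smul_measure, hvol, ENNReal.toReal_inv,
    ENNReal.toReal_ofReal (by positivity), ← integral_Ioc_eq_integral_Ioo,
    ← intervalIntegral.integral_of_le (by linarith)]
  simp_rw [← Complex.ofReal_mul, integral_exp_const_mul_I_eq_sinc, Complex.real_smul]
  have hr' : (r : ℂ) ≠ 0 := by exact_mod_cast hr.ne'
  push_cast
  field_simp

section ComplexVariance

variable {Ω : Type*} [MeasurableSpace Ω] {μ : Measure Ω} [IsProbabilityMeasure μ]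

theorem variance_re_add_variance_im {Z : Ω → ℂ} (hZ : MemLp Z 2 μ) :
    Var[fun ω => (Z ω).re; μ] + Var[fun ω => (Z ω).im; μ]
      = μ[fun ω => ‖Z ω‖ ^ 2] - ‖μ[Z]‖ ^ 2 := by
  have hre : MemLp (fun ω => (Z ω).re) 2 μ := hZ.re
  have him : MemLp (fun ω => (Z ω).im) 2 μ := hZ.im
  have hint : Integrable Z μ := hZ.integrable one_le_two
  have hint_re : μ[fun ω => (Z ω).re] = (μ[Z]).re := integral_re hint
  have hint_im : μ[fun ω => (Z ω).im] = (μ[Z]).im := integral_im hint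
  rw [variance_eq_sub hre, variance_eq_sub him, hint_re, hint_im]
  simp only [Pi.pow_apply, Complex.sq_norm, Complex.normSq_apply, ← sq]
  rw [integral_add hre.integrable_sq him.integrable_sq]
  ring

theorem variance_norm_le_variance_re_add_variance_im {Z : Ω → ℂ} (hZ : MemLp Z 2 μ) :
    Var[fun ω => ‖Z ω‖; μ] ≤ Var[fun ω => (Z ω).re; μ] + Var[fun ω => (Z ω).im; μ] := by
  rw [variance_re_add_variance_im hZ, variance_eq_sub hZ.norm]
  have hmean := norm_integral_le_integral_norm (μ := μ) Z
  simp only [Pi.pow_apply]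
  gcongr

theorem variance_norm_sum_le {ι : Type*} {s : Finset ι} {Z : ι → Ω → ℂ}
    (hZ : ∀ i ∈ s, MemLp (Z i) 2 μ) (hindep : Set.Pairwise s fun i j => Z i ⟂ᵢ[μ] Z j) :
    Var[fun ω => ‖∑ i ∈ s, Z i ω‖; μ]
      ≤ ∑ i ∈ s, (μ[fun ω => ‖Z i ω‖ ^ 2] - ‖μ[Z i]‖ ^ 2) := by
  have hsum : MemLp (fun ω => ∑ i ∈ s, Z i ω) 2 μ := memLp_finsetSum s hZ
  have hcomp {φ : ℂ → ℝ} (hφ : Measurable φ) : Set.Pairwise s fun i j =>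
      (fun ω => φ (Z i ω)) ⟂ᵢ[μ] fun ω => φ (Z j ω) :=
    fun i hi j hj hij => (hindep hi hj hij).comp hφ hφ
  calc Var[fun ω => ‖∑ i ∈ s, Z i ω‖; μ]
      ≤ Var[∑ i ∈ s, fun ω => (Z i ω).re; μ] + Var[∑ i ∈ s, fun ω => (Z i ω).im; μ] := by
        convert variance_norm_le_variance_re_add_variance_im hsum using 3 <;>
          funext ω <;> simp [Complex.re_sum, Complex.im_sum]
    _ = ∑ i ∈ s, (Var[fun ω => (Z i ω).re; μ] + Var[fun ω => (Z i ω).im; μ]) := by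
        rw [IndepFun.variance_sum (X := fun i ω => (Z i ω).re) (fun i hi => (hZ i hi).re)
            (hcomp Complex.measurable_re),
          IndepFun.variance_sum (X := fun i ω => (Z i ω).im) (fun i hi => (hZ i hi).im)
            (hcomp Complex.measurable_im),
          Finset.sum_add_distrib]
    _ = _ := Finset.sum_congr rfl fun i hi => variance_re_add_variance_im (hZ i hi)

theorem variance_norm_sum_le_of_norm_eq_one {ι : Type*} {s : Finset ι} {Z : ι → Ω → ℂ}
    (hmeas : ∀ i ∈ s, AEStronglyMeasurable (Z i) μ) (hnorm : ∀ i ∈ s, ∀ ω, ‖Z i ω‖ = 1)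
    (hindep : Set.Pairwise s fun i j => Z i ⟂ᵢ[μ] Z j) {b : ℝ} (hb : 0 ≤ b)
    (hmean : ∀ i ∈ s, b ≤ ‖μ[Z i]‖) :
    Var[fun ω => ‖∑ i ∈ s, Z i ω‖; μ] ≤ #s * (1 - b ^ 2) := by
  have hmemLp (i : ι) (hi : i ∈ s) : MemLp (Z i) 2 μ :=
    .of_bound (hmeas i hi) 1 (ae_of_all _ fun ω => (hnorm i hi ω).le)
  calc Var[fun ω => ‖∑ i ∈ s, Z i ω‖; μ]
      ≤ ∑ i ∈ s, (μ[fun ω => ‖Z i ω‖ ^ 2] - ‖μ[Z i]‖ ^ 2) := by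
        exact variance_norm_sum_le hmemLp hindep
    _ ≤ ∑ _i ∈ s, (1 - b ^ 2) := by
        refine Finset.sum_le_sum fun i hi => ?_
        have hsq : μ[fun ω => ‖Z i ω‖ ^ 2] = 1 := by simp [hnorm i hi]
        rw [hsq]
        gcongr
        exact hmean i hi
    _ = #s * (1 - b ^ 2) := by rw [sum_const, nsmul_eq_mul]

end ComplexVariance

theorem pulse_sub_eq_indicator (Tp a t : ℝ) :
    pulse Tp (t - a) = (Set.Ioc a (a + Tp)).indicator 1 t := by
  by_cases h : t ∈ Set.Ioc a (a + Tp)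
  · rw [Set.indicator_of_mem h, pulse, if_pos ⟨by linarith [h.1], by linarith [h.2]⟩, Pi.one_apply]
  · rw [Set.indicator_of_notMem h, pulse,
      if_neg fun h' => h ⟨by linarith [h'.1], by linarith [h'.2]⟩]

theorem AF_indicator_zero {S : Set ℝ} (hS : MeasurableSet S) (f : ℝ) :
    AF (S.indicator 1) 0 f = ∫ t in S, Complex.exp (-(2 * π * f * t) * I) := by
  rw [AF, ← integral_indicator hS]
  congr 1 with t
  by_cases h : t ∈ S <;> simp [h]

theorem setIntegral_Ioc_exp_mul_I (c a : ℝ) {T : ℝ} (hT : 0 ≤ T) :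
    ∫ t in Set.Ioc a (a + T), Complex.exp ((c * t : ℝ) * I)
      = Complex.exp ((c * a : ℝ) * I) * ∫ t in (0)..T, Complex.exp ((c * t : ℝ) * I) := by
  rw [← intervalIntegral.integral_of_le (by linarith), ← intervalIntegral.integral_const_mul]
  have hshift := intervalIntegral.integral_comp_add_left
    (fun t : ℝ => Complex.exp ((c * t : ℝ) * I)) (a := 0) (b := T) a
  rw [add_zero] at hshift
  rw [← hshift]
  congr 1 with t
  rw [← Complex.exp_add]
  push_cast
  ring_nf

theorem pairwiseDisjoint_Ioc_of_abs_lt {M : ℕ} {Tr Tp ρ : ℝ} (hTp : 0 ≤ Tp)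
    (hρTr : ρ ≤ Tr - 2 * Tp) {e : ℕ → ℝ} (he : ∀ m < M, |e m| < ρ / 2) :
    (range M : Set ℕ).PairwiseDisjoint fun m => Set.Ioc (m * Tr + e m) (m * Tr + e m + Tp) := by
  have hsep : ∀ m n, m < M → n < M → m < n → (m : ℝ) * Tr + e m + Tp ≤ n * Tr + e n := by
    intro m n hm hn hmn
    have hmn' : (m : ℝ) + 1 ≤ n := by exact_mod_cast hmn
    obtain ⟨hm₁, hm₂⟩ := abs_lt.1 (he m hm)
    obtain ⟨hn₁, hn₂⟩ := abs_lt.1 (he n hn)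
    nlinarith
  intro m hm n hn hmn
  simp only [coe_range, Set.mem_Iio] at hm hn
  rcases lt_or_gt_of_ne hmn with h | h
  · exact Set.Ioc_disjoint_Ioc_of_le (hsep m n hm hn h)
  · exact (Set.Ioc_disjoint_Ioc_of_le (hsep n m hn hm h)).symm

theorem AF_train_zero {M : ℕ} {Tr Tp : ℝ} (hTp : 0 ≤ Tp) {e : ℕ → ℝ}
    (hdisj : (range M : Set ℕ).PairwiseDisjoint
      fun m => Set.Ioc (m * Tr + e m) (m * Tr + e m + Tp)) (f : ℝ) :
    AF (train M Tr Tp e) 0 f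
      = (∑ m ∈ range M, Complex.exp ((-(2 * π * f) * (m * Tr + e m) : ℝ) * I))
        * ∫ t in (0)..Tp, Complex.exp ((-(2 * π * f) * t : ℝ) * I) := by
  have htrain : train M Tr Tp e
      = (⋃ m ∈ range M, Set.Ioc (m * Tr + e m) (m * Tr + e m + Tp)).indicator 1 := by
    funext t
    rw [Finset.indicator_biUnion_apply _ _ hdisj, train]
    simp only [sub_sub, pulse_sub_eq_indicator]
  have hexp (t : ℝ) : Complex.exp (-(2 * π * f * t) * I)
      = Complex.exp ((-(2 * π * f) * t : ℝ) * I) := by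
    push_cast; ring_nf
  rw [htrain, AF_indicator_zero (Finset.measurableSet_biUnion _ fun _ _ => measurableSet_Ioc),
    Finset.sum_mul]
  simp only [hexp]
  rw [integral_biUnion_finset _ (fun _ _ => measurableSet_Ioc) hdisj
    fun _ _ => (by fun_prop : Continuous _).integrableOn_Ioc]
  exact Finset.sum_congr rfl fun m _ => setIntegral_Ioc_exp_mul_I _ _ hTp

theorem norm_AF_train_zero_div {M : ℕ} {Tr Tp ρ : ℝ} (hTp : 0 < Tp) (hρTr : ρ ≤ Tr - 2 * Tp)
    {e : ℕ → ℝ} (he : ∀ m < M, |e m| < ρ / 2) (f : ℝ) :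
    ‖AF (train M Tr Tp e) 0 f‖ / (M * Tp)
      = |Real.sinc (π * f * Tp)| / M
        * ‖∑ m ∈ range M, Complex.exp ((-(2 * π * f) * (m * Tr + e m) : ℝ) * I)‖ := by
  rw [AF_train_zero hTp.le (pairwiseDisjoint_Ioc_of_abs_lt hTp.le hρTr he), norm_mul,
    norm_integral_exp_const_mul_I, abs_of_pos hTp,
    show -(2 * π * f) * Tp / 2 = -(π * f * Tp) by ring, Real.sinc_neg, mul_comm Tp,
    ← mul_assoc, mul_div_mul_right _ _ hTp.ne', mul_comm, mul_div_right_comm]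

section Jitter

variable {Ω : Type*} [MeasurableSpace Ω] {μ : Measure Ω}

theorem integral_exp_mul_I_comp_add {X : Ω → ℝ} (hX : Measurable X) (c a : ℝ) :
    μ[fun ω => Complex.exp ((c * (a + X ω) : ℝ) * I)]
      = Complex.exp ((c * a : ℝ) * I) * charFun (μ.map X) c := by
  rw [charFun_apply_real, ← integral_const_mul,
    integral_map hX.aemeasurable (by fun_prop : Continuous _).aestronglyMeasurable]
  congr 1 with ω
  rw [← Complex.exp_add]
  push_cast
  ring_nf

theorem ae_abs_lt_of_map_eq_cond {X : Ω → ℝ} (hX : Measurable X) {r : ℝ}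
    (hlaw : μ.map X = volume[|Set.Ioo (-r) r]) : ∀ᵐ ω ∂μ, |X ω| < r := by
  have hmem : ∀ᵐ x ∂(μ.map X), x ∈ Set.Ioo (-r) r := by
    rw [hlaw]
    exact ae_cond_mem measurableSet_Ioo
  filter_upwards [ae_of_ae_map hX.aemeasurable hmem] with ω hω
  exact abs_lt.2 hω

variable {M : ℕ} {r : ℝ} {ε : ℕ → Ω → ℝ}

theorem ae_forall_abs_lt_of_map_eq_cond (hr : 0 < r) (hε0 : ∀ ω, ε 0 ω = 0)
    (hmeas : ∀ m, Measurable (ε m))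
    (hlaw : ∀ m, 1 ≤ m → m < M → μ.map (ε m) = volume[|Set.Ioo (-r) r]) :
    ∀ᵐ ω ∂μ, ∀ m < M, |ε m ω| < r := by
  refine ae_all_iff.2 fun m => ?_
  rcases Nat.eq_zero_or_pos m with rfl | hm
  · exact ae_of_all _ fun ω _ => by rwa [hε0, abs_zero]
  by_cases hmM : m < M
  · filter_upwards [ae_abs_lt_of_map_eq_cond (hmeas m) (hlaw m hm hmM)] with ω hω _ using hω
  · exact ae_of_all _ fun ω h => absurd h hmM

theorem abs_sinc_le_norm_integral_exp_mul_I [IsProbabilityMeasure μ] (hr : 0 < r)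
    (hε0 : ∀ ω, ε 0 ω = 0) (hmeas : ∀ m, Measurable (ε m))
    (hlaw : ∀ m, 1 ≤ m → m < M → μ.map (ε m) = volume[|Set.Ioo (-r) r]) (c T : ℝ) {m : ℕ}
    (hm : m < M) :
    |Real.sinc (c * r)| ≤ ‖μ[fun ω => Complex.exp ((c * (m * T + ε m ω) : ℝ) * I)]‖ := by
  rcases Nat.eq_zero_or_pos m with rfl | hm₀
  · simp [hε0, Real.abs_sinc_le_one]
  rw [integral_exp_mul_I_comp_add (hmeas m), hlaw m hm₀ hm, charFun_cond_Ioo hr, norm_mul,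
    Complex.norm_exp_ofReal_mul_I, one_mul, Complex.norm_real, Real.norm_eq_abs]

theorem pairwise_indepFun_comp (hindep : iIndepFun (fun m : Fin M => ε m) μ)
    {φ : ℕ → ℝ → ℂ} (hφ : ∀ m, Measurable (φ m)) :
    Set.Pairwise (range M : Set ℕ) fun m n =>
      (fun ω => φ m (ε m ω)) ⟂ᵢ[μ] fun ω => φ n (ε n ω) := by
  intro m hm n hn hmn
  simp only [coe_range, Set.mem_Iio] at hm hn
  exact (hindep.indepFun (i := ⟨m, hm⟩) (j := ⟨n, hn⟩) (by simpa [Fin.ext_iff] using hmn)).comp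
    (hφ m) (hφ n)

theorem variance_norm_sum_exp_mul_I_le [IsProbabilityMeasure μ] (hr : 0 < r)
    (hε0 : ∀ ω, ε 0 ω = 0) (hmeas : ∀ m, Measurable (ε m))
    (hlaw : ∀ m, 1 ≤ m → m < M → μ.map (ε m) = volume[|Set.Ioo (-r) r])
    (hindep : iIndepFun (fun m : Fin M => ε m) μ) (c T : ℝ) :
    Var[fun ω => ‖∑ m ∈ range M, Complex.exp ((c * (m * T + ε m ω) : ℝ) * I)‖; μ]
      ≤ M * (1 - Real.sinc (c * r) ^ 2) := by
  simpa using variance_norm_sum_le_of_norm_eq_one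
    (fun m _ => (by fun_prop : Measurable _).aestronglyMeasurable)
    (fun m _ ω => Complex.norm_exp_ofReal_mul_I _)
    (pairwise_indepFun_comp hindep
      (φ := fun m x => Complex.exp ((c * (m * T + x) : ℝ) * I)) (by fun_prop))
    (abs_nonneg _)
    (fun m hm => abs_sinc_le_norm_integral_exp_mul_I hr hε0 hmeas hlaw c T (mem_range.1 hm))

end Jitter

theorem doppler_cut_std_general
    {Ω : Type*} [MeasurableSpace Ω] (μ : Measure Ω) [IsProbabilityMeasure μ]
    (M : ℕ) (Tr Tp ρ : ℝ) (hTp : 0 < Tp) (hρ : 0 < ρ)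
    (hρTr : ρ ≤ Tr - 2 * Tp)
    (ε : ℕ → Ω → ℝ) (hε0 : ∀ ω, ε 0 ω = 0)
    (hmeas : ∀ m, Measurable (ε m))
    (hdist : ∀ m, 1 ≤ m → m ≤ M - 1 →
      Measure.map (ε m) μ = (ENNReal.ofReal ρ)⁻¹ • volume.restrict (Set.Ioo (-(ρ / 2)) (ρ / 2)))
    (hindep : iIndepFun (fun m : Fin M => ε (m : ℕ)) μ)
    (f : ℝ) :
    Real.sqrt (variance (fun ω => ‖AF (train M Tr Tp (fun k => ε k ω)) 0 f‖ / ((M : ℝ) * Tp)) μ)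
      ≤ Real.sqrt ((1 - _root_.sinc (Real.pi * f * ρ) ^ 2) / M) * |_root_.sinc (Real.pi * f * Tp)| := by
  change √(Var[_; μ]) ≤ √((1 - Real.sinc (π * f * ρ) ^ 2) / M) * |Real.sinc (π * f * Tp)|
  set s := Real.sinc (π * f * ρ)
  set a := |Real.sinc (π * f * Tp)|
  set S : Ω → ℝ := fun ω =>
    ‖∑ m ∈ range M, Complex.exp ((-(2 * π * f) * (m * Tr + ε m ω) : ℝ) * I)‖
  have hlaw (m : ℕ) (h₁ : 1 ≤ m) (h₂ : m < M) :
      μ.map (ε m) = volume[|Set.Ioo (-(ρ / 2)) (ρ / 2)] := by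
    rw [hdist m h₁ (Nat.le_sub_one_of_lt h₂), ProbabilityTheory.cond, Real.volume_Ioo]
    ring_nf
  have hX : (fun ω => ‖AF (train M Tr Tp (fun k => ε k ω)) 0 f‖ / ((M : ℝ) * Tp))
      =ᵐ[μ] fun ω => a / M * S ω := by
    filter_upwards [ae_forall_abs_lt_of_map_eq_cond (by positivity) hε0 hmeas hlaw] with ω hω
    exact norm_AF_train_zero_div hTp hρTr hω f
  have hvar : Var[S; μ] ≤ M * (1 - s ^ 2) := by
    have h := variance_norm_sum_exp_mul_I_le (by positivity) hε0 hmeas hlaw hindep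
      (-(2 * π * f)) Tr
    rwa [show -(2 * π * f) * (ρ / 2) = -(π * f * ρ) by ring, Real.sinc_neg] at h
  rw [variance_congr hX, variance_const_mul]
  calc √((a / M) ^ 2 * Var[S; μ])
      ≤ √((a / M) ^ 2 * (M * (1 - s ^ 2))) := by gcongr
    _ = √(a ^ 2 * ((1 - s ^ 2) / M)) := by
        rcases eq_or_ne (M : ℝ) 0 with h | h
        · simp [h]
        · field_simp
    _ = √((1 - s ^ 2) / M) * a := by
        rw [Real.sqrt_mul (sq_nonneg a), Real.sqrt_sq (abs_nonneg _), mul_comm]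

/-- **Standard deviation of the Doppler cut.** For every `f`,
`std[|Λ_yy(0,f)|/(M Tp)] ≤ √((1 - sinc²(π f ρ))/M) |sinc(π f Tp)|`. -/
theorem doppler_cut_std
    {Ω : Type*} [MeasurableSpace Ω] (μ : Measure Ω) [IsProbabilityMeasure μ]
    (M : ℕ) (hM : 1 ≤ M) (Tr Tp ρ : ℝ) (hTp : 0 < Tp) (hρ : 0 < ρ)
    (hρTr : ρ ≤ Tr - 2 * Tp)
    (ε : ℕ → Ω → ℝ) (hε0 : ∀ ω, ε 0 ω = 0)
    (hmeas : ∀ m, Measurable (ε m))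
    (hdist : ∀ m, 1 ≤ m → m ≤ M - 1 →
      Measure.map (ε m) μ = (ENNReal.ofReal ρ)⁻¹ • volume.restrict (Set.Ioo (-(ρ / 2)) (ρ / 2)))
    (hindep : iIndepFun (fun m : Fin M => ε (m : ℕ)) μ)
    (f : ℝ) :
    Real.sqrt (variance (fun ω => ‖AF (train M Tr Tp (fun k => ε k ω)) 0 f‖ / ((M : ℝ) * Tp)) μ)
      ≤ Real.sqrt ((1 - _root_.sinc (Real.pi * f * ρ) ^ 2) / M) * |_root_.sinc (Real.pi * f * Tp)| :=
  doppler_cut_std_general μ M Tr Tp ρ hTp hρ hρTr ε hε0 hmeas hdist hindep f
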